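/- arXiv:2304.01098 — 2 statements merged into one kernel-verified Lean document; each statement's English description precedes it below -/
import Mathlib

section
/- Under the model X = ΛU + ε_x, Y = Xᵀβ + g(U) + ε_y, where ε_x is independent of (U, ε_y), ε_y has mean zero and is independent of (X,U), g is measurable with E[g(U)] = 0, and B ∈ ℝ^{p×(p−q)} satisfies Bᵀ Λ = 0, the synthetic instrument SIV = Bᵀ X satisfies the exclusion/unconfoundedness moment condition: E[SIV · (Y − Xᵀβ)] = 0 when β equals its true value. -/
/-!
Since `Bᵀ Λ = 0`, the instrument `Bᵀ X` equals `Bᵀ εx`, and at the true `β` the residual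
`Y - Xᵀβ` is `g(U) + εy`, which is independent of `εx`. Each coordinate of the moment is thus
`E[εx_j (g(U) + εy)] = E[εx_j] E[g(U) + εy] = 0`.

Only the products are assumed integrable, not the factors measurable, so the factorisation needs
one more fact: if `f` and `h` are independent, `f h` is a.e. measurable and `f` is not a.e. zero,
then `h` is a.e. measurable. On a band `{a ≤ f < a r}` of positive outer measure the product
determines `h` up to the factor `r`, and independence spreads this over all of `Ω`: letting
`r → 1` gives `μ {h > t} + μ {h ≤ t} ≤ 1` (outer measures) at every continuity point `t > 0` of
`t ↦ μ {h > t}`, so these level sets are null measurable.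
-/

open Set Filter Topology MeasureTheory ProbabilityTheory

section

variable {Ω : Type*} [MeasurableSpace Ω] {μ : Measure Ω}

theorem nullMeasurableSet_of_measure_add_measure_compl_le [IsFiniteMeasure μ] {s : Set Ω}
    (h : μ s + μ sᶜ ≤ μ univ) : NullMeasurableSet s μ := by
  set M := toMeasurable μ s
  have hM : MeasurableSet M := measurableSet_toMeasurable μ s
  have hsM : s ⊆ M := subset_toMeasurable μ s
  have hsplit : μ (M \ s) + μ Mᶜ = μ sᶜ := by
    have hMc : sᶜ \ M = Mᶜ := by
      rw [sdiff_eq, inter_eq_right.mpr (compl_subset_compl.mpr hsM)]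
    rw [← measure_inter_add_sdiff sᶜ hM, hMc, inter_comm, sdiff_eq]
  have hnull : μ (M \ s) = 0 := by
    refine le_antisymm ((ENNReal.add_le_add_iff_left (by finiteness : μ s + μ Mᶜ ≠ ⊤)).mp ?_)
      zero_le
    calc μ s + μ Mᶜ + μ (M \ s) = μ s + μ sᶜ := by rw [← hsplit]; ring
      _ ≤ μ univ := h
      _ = μ s + μ Mᶜ + 0 := by
          rw [add_zero, ← measure_toMeasurable s, measure_add_measure_compl hM]
  exact hM.nullMeasurableSet.congr (ae_eq_set.mpr ⟨by simp [sdiff_eq_empty.mpr hsM], hnull⟩).symm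

theorem exists_measure_preimage_Ico_ne_zero {f : Ω → ℝ} (hf : ¬ f =ᵐ[μ] 0) {r : ℝ} (hr : 1 < r) :
    ∃ g ∈ ({f, -f} : Set (Ω → ℝ)), ∃ a, 0 < a ∧ μ (g ⁻¹' Ico a (a * r)) ≠ 0 := by
  by_contra! H
  refine hf (measure_mono_null (fun ω (hω : f ω ≠ 0) => ?_) (measure_iUnion_null fun n : ℤ =>
    measure_union_null (H f (by simp) (r ^ n) (by positivity))
      (H (-f) (by simp) (r ^ n) (by positivity))))
  obtain ⟨n, hn⟩ := exists_mem_Ico_zpow (abs_pos.mpr hω) hr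
  rw [zpow_add_one₀ (by positivity)] at hn
  refine mem_iUnion.mpr ⟨n, ?_⟩
  rcases abs_cases (f ω) with ⟨h, -⟩ | ⟨h, -⟩
  · exact Or.inl (by simpa [h] using hn)
  · exact Or.inr (by simpa [h] using hn)

theorem ProbabilityTheory.IndepFun.measure_preimage_Ioi_add_le_of_band [IsFiniteMeasure μ]
    {f h P : Ω → ℝ} (hind : IndepFun f h μ) (hP : Measurable P)
    (hfh : ∀ᵐ ω ∂μ, f ω * h ω = P ω) {a r t : ℝ} (ha : 0 < a) (hr : 1 < r) (ht : 0 < t)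
    (hF : μ (f ⁻¹' Ico a (a * r)) ≠ 0) :
    μ (h ⁻¹' Ioi t) + μ (h ⁻¹' Iic t) + μ (h ⁻¹' Ioi (t * r)) ≤ 1 + μ (h ⁻¹' Ioi (t / r)) := by
  set F := f ⁻¹' Ico a (a * r)
  have hmul (T : Set ℝ) (hT : MeasurableSet T) : μ (F ∩ h ⁻¹' T) = μ F * μ (h ⁻¹' T) :=
    hind.measure_inter_preimage_eq_mul _ _ measurableSet_Ico hT
  have hmono {A B : Set Ω}
      (H : ∀ ω, f ω * h ω = P ω → a ≤ f ω → f ω < a * r → ω ∈ A → ω ∈ B) :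
      μ (F ∩ A) ≤ μ (F ∩ B) :=
    measure_mono_ae (hfh.mono fun ω hω ⟨hωF, hωA⟩ => ⟨hωF, H ω hω hωF.1 hωF.2 hωA⟩)
  have hr0 : 0 < r := by linarith
  have hgt : μ (F ∩ h ⁻¹' Ioi t) ≤ μ (F ∩ P ⁻¹' Ioi (t * a)) :=
    hmono fun ω hω h1 _ (hh : t < h ω) => show t * a < P ω by nlinarith
  have hle : μ (F ∩ h ⁻¹' Iic t) ≤ μ (F ∩ (P ⁻¹' Ioi (t * a * r))ᶜ) :=
    hmono fun ω hω h1 h2 (hh : h ω ≤ t) => show ¬ t * a * r < P ω by nlinarith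
  have hgt_mul : μ (F ∩ h ⁻¹' Ioi (t * r)) ≤ μ (F ∩ P ⁻¹' Ioi (t * a * r)) :=
    hmono fun ω hω h1 _ (hh : t * r < h ω) => show t * a * r < P ω by
      nlinarith [mul_le_mul_of_nonneg_right h1 (by positivity : (0 : ℝ) ≤ t * r)]
  have hP_gt : μ (F ∩ P ⁻¹' Ioi (t * a)) ≤ μ (F ∩ h ⁻¹' Ioi (t / r)) :=
    hmono fun ω hω h1 h2 (hh : t * a < P ω) => show t / r < h ω by
      rw [div_lt_iff₀ hr0]; nlinarith
  refine (ENNReal.mul_le_mul_iff_right hF (measure_ne_top μ F)).mp ?_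
  calc μ F * (μ (h ⁻¹' Ioi t) + μ (h ⁻¹' Iic t) + μ (h ⁻¹' Ioi (t * r)))
      = μ (F ∩ h ⁻¹' Ioi t) + μ (F ∩ h ⁻¹' Iic t) + μ (F ∩ h ⁻¹' Ioi (t * r)) := by
        rw [mul_add, mul_add, hmul _ measurableSet_Ioi, hmul _ measurableSet_Iic,
          hmul _ measurableSet_Ioi]
    _ ≤ μ (F ∩ P ⁻¹' Ioi (t * a)) +
          (μ (F ∩ (P ⁻¹' Ioi (t * a * r))ᶜ) + μ (F ∩ P ⁻¹' Ioi (t * a * r))) := by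
        rw [← add_assoc]; gcongr
    _ = μ (F ∩ P ⁻¹' Ioi (t * a)) + μ F := by
        rw [add_comm (μ (F ∩ _ᶜ)), ← Set.sdiff_eq, measure_inter_add_sdiff _ (hP measurableSet_Ioi)]
    _ ≤ μ (F ∩ h ⁻¹' Ioi (t / r)) + μ F := by gcongr
    _ = μ F * (1 + μ (h ⁻¹' Ioi (t / r))) := by
        rw [hmul _ measurableSet_Ioi, mul_add, mul_one, add_comm]

theorem ProbabilityTheory.IndepFun.measure_preimage_Ioi_add_measure_preimage_Iic_le_one
    [IsFiniteMeasure μ] {f h P : Ω → ℝ} (hind : IndepFun f h μ) (hP : Measurable P)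
    (hfh : ∀ᵐ ω ∂μ, f ω * h ω = P ω) (hf : ¬ f =ᵐ[μ] 0) {t : ℝ} (ht : 0 < t)
    (hcont : ContinuousAt (fun s => μ (h ⁻¹' Ioi s)) t) :
    μ (h ⁻¹' Ioi t) + μ (h ⁻¹' Iic t) ≤ 1 := by
  set η := fun s => μ (h ⁻¹' Ioi s)
  have hband (r : ℝ) (hr : 1 < r) : η t + μ (h ⁻¹' Iic t) + η (t * r) ≤ 1 + η (t / r) := by
    obtain ⟨g, hg, a, ha, hF⟩ := exists_measure_preimage_Ico_ne_zero hf hr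
    rcases hg with rfl | rfl
    · exact hind.measure_preimage_Ioi_add_le_of_band hP hfh ha hr ht hF
    · exact hind.neg_left.measure_preimage_Ioi_add_le_of_band hP.neg
        (hfh.mono fun ω hω => by simp [← hω]) ha hr ht hF
  have hmul : Tendsto (fun r => η (t * r)) (𝓝[>] 1) (𝓝 (η t)) := by
    have : ContinuousAt (fun r : ℝ => t * r) 1 := by fun_prop
    exact hcont.tendsto.comp (tendsto_nhdsWithin_of_tendsto_nhds (by simpa using this.tendsto))
  have hdiv : Tendsto (fun r => η (t / r)) (𝓝[>] 1) (𝓝 (η t)) := by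
    have : ContinuousAt (fun r : ℝ => t / r) 1 := by fun_prop (disch := norm_num)
    exact hcont.tendsto.comp (tendsto_nhdsWithin_of_tendsto_nhds (by simpa using this.tendsto))
  have hlim : η t + μ (h ⁻¹' Iic t) + η t ≤ 1 + η t :=
    le_of_tendsto_of_tendsto (tendsto_const_nhds.add hmul) (tendsto_const_nhds.add hdiv)
      (eventually_nhdsWithin_of_forall hband)
  exact (ENNReal.add_le_add_iff_right (measure_ne_top μ _)).mp hlim

theorem nullMeasurable_of_dense_preimage_Ioi {h : Ω → ℝ} {D : Set ℝ} (hD : Dense D)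
    (hh : ∀ t ∈ D, NullMeasurableSet (h ⁻¹' Ioi t) μ) : NullMeasurable h μ := by
  refine measurable_of_Ioi fun x => show NullMeasurableSet (h ⁻¹' Ioi x) μ from ?_
  obtain ⟨u, -, hu, hux⟩ := hD.exists_seq_strictAnti_tendsto x
  have hunion : h ⁻¹' Ioi x = ⋃ n, h ⁻¹' Ioi (u n) := by
    ext ω
    simp only [mem_preimage, mem_Ioi, mem_iUnion]
    exact ⟨fun hx => (hux.eventually (gt_mem_nhds hx)).exists,
      fun ⟨n, hn⟩ => (hu n).1.trans hn⟩
  rw [hunion]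
  exact MeasurableSet.iUnion fun n => hh _ (hu n).2

theorem ProbabilityTheory.IndepFun.aemeasurable_max_zero_right [IsProbabilityMeasure μ]
    {f h : Ω → ℝ} (hind : IndepFun f h μ) (hfh : AEMeasurable (fun ω => f ω * h ω) μ)
    (hf : ¬ f =ᵐ[μ] 0) : AEMeasurable (fun ω => max (h ω) 0) μ := by
  set η := fun s => μ (h ⁻¹' Ioi s)
  have hanti : Antitone η := fun _ _ hst => measure_mono (preimage_mono (Ioi_subset_Ioi hst))
  have hD : Dense ({t | ¬ ContinuousAt η t} ∪ {0})ᶜ :=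
    (hanti.countable_not_continuousAt.union (countable_singleton 0)).dense_compl ℝ
  refine (nullMeasurable_of_dense_preimage_Ioi hD fun t ht => ?_).aemeasurable
  simp only [mem_compl_iff, mem_union, mem_ofPred_eq, mem_singleton_iff, not_or, not_not] at ht
  rcases lt_or_gt_of_ne ht.2 with htneg | htpos
  · rw [eq_univ_of_forall (s := (fun ω => max (h ω) 0) ⁻¹' Ioi t)
      fun ω => lt_max_of_lt_right htneg]
    exact nullMeasurableSet_univ
  · have hset : (fun ω => max (h ω) 0) ⁻¹' Ioi t = h ⁻¹' Ioi t := by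
      ext ω; simp [htpos.not_gt]
    rw [hset]
    refine nullMeasurableSet_of_measure_add_measure_compl_le ?_
    rw [← preimage_compl, compl_Ioi, measure_univ]
    exact hind.measure_preimage_Ioi_add_measure_preimage_Iic_le_one hfh.measurable_mk
      hfh.ae_eq_mk hf htpos ht.1

theorem ProbabilityTheory.IndepFun.aemeasurable_right_of_aemeasurable_mul
    [IsProbabilityMeasure μ] {f h : Ω → ℝ} (hind : IndepFun f h μ)
    (hfh : AEMeasurable (fun ω => f ω * h ω) μ) (hf : ¬ f =ᵐ[μ] 0) : AEMeasurable h μ := by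
  have hpos := hind.aemeasurable_max_zero_right hfh hf
  have hneg := hind.neg_right.aemeasurable_max_zero_right (by simpa using hfh) hf
  convert hpos.sub hneg using 1
  ext ω
  exact (max_zero_sub_max_neg_zero_eq_self (h ω)).symm

theorem ProbabilityTheory.IndepFun.integral_mul_eq_mul_integral_of_aemeasurable_mul
    [IsProbabilityMeasure μ] {f h : Ω → ℝ} (hind : IndepFun f h μ)
    (hfh : AEMeasurable (fun ω => f ω * h ω) μ) :
    ∫ ω, f ω * h ω ∂μ = (∫ ω, f ω ∂μ) * ∫ ω, h ω ∂μ := by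
  by_cases hf : f =ᵐ[μ] 0
  · rw [integral_congr_ae (hf.mono fun ω hω => by simp [hω] : (fun ω => f ω * h ω) =ᵐ[μ] 0),
      integral_congr_ae hf]
    simp
  by_cases hh : h =ᵐ[μ] 0
  · rw [integral_congr_ae (hh.mono fun ω hω => by simp [hω] : (fun ω => f ω * h ω) =ᵐ[μ] 0),
      integral_congr_ae hh]
    simp
  have hhf : AEMeasurable (fun ω => h ω * f ω) μ := by simpa only [mul_comm] using hfh
  exact hind.integral_fun_mul_eq_mul_integral
    (hind.symm.aemeasurable_right_of_aemeasurable_mul hhf hh).aestronglyMeasurable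
    (hind.aemeasurable_right_of_aemeasurable_mul hfh hf).aestronglyMeasurable

theorem Matrix.integral_mulVec_apply_mul_eq_zero {ι κ : Type*} [Fintype κ] (M : Matrix ι κ ℝ)
    {Z : Ω → κ → ℝ} {R : Ω → ℝ}
    (hint : ∀ j, Integrable (fun ω => Z ω j * R ω) μ) (hzero : ∀ j, ∫ ω, Z ω j * R ω ∂μ = 0)
    (i : ι) : ∫ ω, (M.mulVec (Z ω)) i * R ω ∂μ = 0 := by
  simp_rw [Matrix.mulVec, dotProduct, Finset.sum_mul, mul_assoc]
  rw [integral_finsetSum _ fun j _ => (hint j).const_mul _]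
  simp [integral_const_mul, hzero]

end

open Matrix

theorem siv_moment_condition_general {p q : ℕ}
    {Ω : Type*} [MeasurableSpace Ω] (μ : Measure Ω) [IsProbabilityMeasure μ]
    (Λ : Matrix (Fin p) (Fin q) ℝ)
    (B : Matrix (Fin p) (Fin (p - q)) ℝ) (hBΛ : Bᵀ * Λ = 0)
    (X εx : Ω → Fin p → ℝ) (U : Ω → Fin q → ℝ) (Y εy : Ω → ℝ)
    (β : Fin p → ℝ) (g : (Fin q → ℝ) → ℝ) (hg : Measurable g)
    (hX : ∀ ω, X ω = Λ.mulVec (U ω) + εx ω)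
    (hY : ∀ ω, Y ω = X ω ⬝ᵥ β + g (U ω) + εy ω)
    (hIndep : IndepFun εx (fun ω => (U ω, εy ω)) μ)
    (hEεx : ∀ i, ∫ ω, εx ω i ∂μ = 0)
    (hInt1 : ∀ i, Integrable (fun ω => εx ω i * g (U ω)) μ)
    (hInt2 : ∀ i, Integrable (fun ω => εx ω i * εy ω) μ) :
    ∀ i, ∫ ω, Bᵀ.mulVec (X ω) i * (Y ω - X ω ⬝ᵥ β) ∂μ = 0 := by
  have hSIV (ω : Ω) : Bᵀ.mulVec (X ω) = Bᵀ.mulVec (εx ω) := by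
    rw [hX, mulVec_add, mulVec_mulVec, hBΛ, zero_mulVec, zero_add]
  have hres (ω : Ω) : Y ω - X ω ⬝ᵥ β = g (U ω) + εy ω := by
    rw [hY]; ring
  have hint (j : Fin p) : Integrable (fun ω => εx ω j * (g (U ω) + εy ω)) μ := by
    simp_rw [mul_add]
    exact (hInt1 j).add (hInt2 j)
  have hmoment (j : Fin p) : ∫ ω, εx ω j * (g (U ω) + εy ω) ∂μ = 0 := by
    have hind : IndepFun (fun ω => εx ω j) (fun ω => g (U ω) + εy ω) μ :=
      hIndep.comp (measurable_pi_apply j) ((hg.comp measurable_fst).add measurable_snd)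
    rw [hind.integral_mul_eq_mul_integral_of_aemeasurable_mul (hint j).aemeasurable, hEεx,
      zero_mul]
  simp_rw [hSIV, hres]
  exact integral_mulVec_apply_mul_eq_zero Bᵀ hint hmoment

/-- Under the model `X = ΛU + εx`, `Y = Xᵀβ + g(U) + εy`, with
`εx ⟂ (U, εy)`, `εy ⟂ (X, U)`, all centered and `E g(U) = 0`, the synthetic
instrument `SIV = BᵀX` (where `BᵀΛ = 0`) satisfies the exclusion/unconfoundedness
moment condition `E[SIV (Y - Xᵀβ)] = 0` at the true `β`. -/
theorem siv_moment_condition {p q : ℕ} (hq : q < p)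
    {Ω : Type*} [MeasurableSpace Ω] (μ : Measure Ω) [IsProbabilityMeasure μ]
    (Λ : Matrix (Fin p) (Fin q) ℝ)
    (B : Matrix (Fin p) (Fin (p - q)) ℝ) (hBΛ : Bᵀ * Λ = 0)
    (X εx : Ω → Fin p → ℝ) (U : Ω → Fin q → ℝ) (Y εy : Ω → ℝ)
    (β : Fin p → ℝ) (g : (Fin q → ℝ) → ℝ) (hg : Measurable g)
    (hX : ∀ ω, X ω = Λ.mulVec (U ω) + εx ω)
    (hY : ∀ ω, Y ω = X ω ⬝ᵥ β + g (U ω) + εy ω)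
    (hIndep : IndepFun εx (fun ω => (U ω, εy ω)) μ)
    (hIndep2 : IndepFun εy (fun ω => (X ω, U ω)) μ)
    (hEg : ∫ ω, g (U ω) ∂μ = 0)
    (hEεy : ∫ ω, εy ω ∂μ = 0)
    (hEεx : ∀ i, ∫ ω, εx ω i ∂μ = 0)
    (hInt1 : ∀ i, Integrable (fun ω => εx ω i * g (U ω)) μ)
    (hInt2 : ∀ i, Integrable (fun ω => εx ω i * εy ω) μ) :
    ∀ i, ∫ ω, Bᵀ.mulVec (X ω) i * (Y ω - X ω ⬝ᵥ β) ∂μ = 0 :=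
  siv_moment_condition_general μ Λ B hBΛ X εx U Y εy β g hg hX hY hIndep hEεx hInt1 hInt2
end

section
/- Consider the identification equations Cov(X_j, Y) = Σ_k β_k Cov(X_j, X_k) + γ Λ_j for j = 1,…,p, arising from X = ΛU + ε_x (with Λ ∈ ℝ^{p×1}, U scalar, Cov(U)=1), Y = Xᵀβ + γU + ε_y, Cov(ε_x, U)=0, Cov(ε_x, ε_y)=0, Cov(U, ε_y)=0, Cov(ε_x)=D ≻ 0. If additionally β_j = 0 for some known j with Λ having all entries nonzero, and Σ_X = D + ΛΛᵀ is invertible, then (β_{−j}, γ²) is uniquely determined by Σ_X, Cov(X,Y), and Λ up to the sign of γ. -/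
open Matrix

/-- in the single-factor (`q = 1`) model with identification
equations `Cov(X, Y) = Σ_X β + γ Λ` (`Σ_X = D + ΛΛᵀ`), if `β_j = 0` is known
for some `j`, `Σ_X` is invertible, and every entry of `Σ_X⁻¹ Λ` is nonzero,
then `(β, |γ|)` is uniquely determined: any two solutions with `β_j = β'_j = 0`
satisfy `β = β'` and `|γ| = |γ'|`. -/
theorem q1_identification_given_null_coordinate {p : ℕ} (hp : 2 ≤ p)
    (D : Matrix (Fin p) (Fin p) ℝ) (hD : D.PosDef)
    (Λ : Fin p → ℝ) (hΛ : ∀ i, Λ i ≠ 0)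
    (covXY : Fin p → ℝ)
    (hSX : IsUnit (D + vecMulVec Λ Λ).det)
    (hA1 : ∀ i, (D + vecMulVec Λ Λ)⁻¹.mulVec Λ i ≠ 0)
    (j : Fin p) (β β' : Fin p → ℝ) (γ γ' : ℝ)
    (hβj : β j = 0) (hβ'j : β' j = 0)
    (heq : ∀ i, covXY i = (D + vecMulVec Λ Λ).mulVec β i + γ * Λ i)
    (heq' : ∀ i, covXY i = (D + vecMulVec Λ Λ).mulVec β' i + γ' * Λ i) :
    β = β' ∧ |γ| = |γ'| := by
  set S := D + vecMulVec Λ Λ with hS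
  have hinv : Invertible S := S.invertibleOfIsUnitDet hSX
  have hdiff : S.mulVec (β - β') = (γ' - γ) • Λ := by
    funext i
    have h1 := heq i
    have h2 := heq' i
    simp only [Matrix.mulVec_sub, Pi.sub_apply, Pi.smul_apply, smul_eq_mul]
    linarith
  have hkey : β - β' = (γ' - γ) • S⁻¹.mulVec Λ := by
    have := congrArg (S⁻¹.mulVec ·) hdiff
    simpa [Matrix.mulVec_mulVec, Matrix.inv_mul_of_invertible, Matrix.mulVec_smul] using this
  have hj := congrFun hkey j
  simp only [Pi.sub_apply, hβj, hβ'j, sub_zero, Pi.smul_apply, smul_eq_mul, sub_self] at hj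
  have hγ : γ' - γ = 0 := by
    rcases mul_eq_zero.mp hj.symm with h | h
    · exact h
    · exact absurd h (hA1 j)
  have hγγ : γ = γ' := by linarith
  constructor
  · have : β - β' = 0 := by rw [hkey, hγ, zero_smul]
    funext i; have := congrFun this i; simp at this; linarith [this]
  · rw [hγγ]
end
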